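/- Let φ be bounded on ℝⁿ and belong to lmo(ℝⁿ), i.e. sup_{|B|≤1} (log(e+1/|B|)/|B|)∫_B |φ − φ_B| dx < ∞ and sup_{|B|≥1} (1/|B|)∫_B |φ| dx < ∞. Then for every b in bmo(ℝⁿ), the pointwise product bφ belongs to bmo(ℝⁿ), with ‖bφ‖_{bmo} ≤ C (‖φ‖_∞ + ‖φ‖_{lmo}) ‖b‖_{bmo}. -/

import Mathlib

/-!
On a ball `B` of volume at most one,
`bφ - b_B φ_B = φ (b - b_B) + b_B (φ - φ_B)`, so the mean oscillation of `bφ` on `B` is at most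
`2 (‖φ‖_∞ ‖b‖_{bmo} + |b_B| ⨍_B |φ - φ_B|)`. The averages of `b` over `B, 2B, …, 2^k B` differ
successively by at most `2^n` times a bmo oscillation, and `2^k B` has volume at least one as soon
as `2^k ≥ 1/|B|`, where `|b_{2^k B}| ≤ ‖b‖_{bmo}`. Hence `|b_B| ≲ log(e + 1/|B|) ‖b‖_{bmo}`, which
is exactly the weight that the lmo condition on `φ` absorbs. On balls of volume at least one,
`|bφ| ≤ ‖φ‖_∞ |b|` suffices.
-/

open Real MeasureTheory Metric

/-- The average of b over the ball of center c and radius r. -/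
noncomputable def avgBall {n : ℕ} (b : EuclideanSpace ℝ (Fin n) → ℝ)
    (c : EuclideanSpace ℝ (Fin n)) (r : ℝ) : ℝ :=
  ((volume (ball c r)).toReal)⁻¹ * ∫ x in ball c r, b x

open Module

namespace MeasureTheory

theorem LocallyIntegrable.mul_bdd {X 𝕜 : Type*} [TopologicalSpace X] [MeasurableSpace X]
    [NormedRing 𝕜] {μ : Measure X} {f g : X → 𝕜} {C : ℝ} (hf : LocallyIntegrable f μ)
    (hg : AEStronglyMeasurable g μ) (hg_bound : ∀ x, ‖g x‖ ≤ C) :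
    LocallyIntegrable (fun x => f x * g x) μ := fun x =>
  let ⟨s, hs, hfs⟩ := hf x
  ⟨s, hs, hfs.mul_bdd hg.restrict (ae_of_all _ hg_bound)⟩

theorem LocallyIntegrable.integrableOn_ball {X E : Type*} [PseudoMetricSpace X] [ProperSpace X]
    [MeasurableSpace X] [NormedAddCommGroup E] {μ : Measure X} {f : X → E}
    (hf : LocallyIntegrable f μ) (c : X) (r : ℝ) : IntegrableOn f (ball c r) μ :=
  (hf.integrableOn_isCompact (isCompact_closedBall c r)).mono_set ball_subset_closedBall

namespace Measure

variable {E : Type*} [NormedAddCommGroup E] [NormedSpace ℝ E] [MeasurableSpace E] [BorelSpace E]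
  [FiniteDimensional ℝ E] (μ : Measure E) [μ.IsAddHaarMeasure]

theorem addHaar_ball_two_pow_mul (c : E) (r : ℝ) (k : ℕ) :
    μ (ball c (2 ^ k * r)) = 2 ^ (finrank ℝ E * k) * μ (ball c r) := by
  rw [addHaar_ball_mul_of_pos μ c (by positivity), addHaar_ball_center μ c r, ← pow_mul,
    mul_comm k, ENNReal.ofReal_pow zero_le_two, ENNReal.ofReal_ofNat]

theorem exists_addHaar_ball_eq_one (hE : finrank ℝ E ≠ 0) : ∃ r > 0, μ (ball (0 : E) r) = 1 := by
  set V := (μ (ball (0 : E) 1)).toReal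
  have hV : 0 < V := ENNReal.toReal_pos (measure_ball_pos μ 0 one_pos).ne' measure_ball_lt_top.ne
  refine ⟨V⁻¹ ^ (finrank ℝ E : ℝ)⁻¹, by positivity, ?_⟩
  rw [addHaar_ball_of_pos μ 0 (by positivity), rpow_inv_natCast_pow (by positivity) hE,
    ← ENNReal.ofReal_toReal measure_ball_lt_top.ne, ← ENNReal.ofReal_mul (by positivity),
    inv_mul_cancel₀ hV.ne', ENNReal.ofReal_one]

end Measure

end MeasureTheory

theorem one_le_log_exp_one_add {x : ℝ} (hx : 0 ≤ x) : 1 ≤ log (exp 1 + x) :=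
  calc 1 = log (exp 1) := (log_exp 1).symm
    _ ≤ log (exp 1 + x) := log_le_log (exp_pos 1) (le_add_of_nonneg_right hx)

theorem exists_le_two_pow_and_le_three_mul_log {x : ℝ} (hx : 1 ≤ x) :
    ∃ k : ℕ, x ≤ 2 ^ k ∧ (k : ℝ) ≤ 3 * log (exp 1 + x) := by
  have hlog2 : 1 / 2 < log 2 := by linarith [log_two_gt_d9]
  have hlogx : 0 ≤ log x := log_nonneg hx
  refine ⟨⌈log x / log 2⌉₊, ?_, ?_⟩
  · rw [← log_le_log_iff (by positivity) (by positivity), log_pow, ← div_le_iff₀ (by positivity)]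
    exact Nat.le_ceil _
  · have hk : (⌈log x / log 2⌉₊ : ℝ) < log x / log 2 + 1 := Nat.ceil_lt_add_one (by positivity)
    have hdiv : log x / log 2 ≤ 2 * log x := by
      rw [div_le_iff₀ (by positivity)]
      nlinarith
    have hxL : log x ≤ log (exp 1 + x) := log_le_log (by positivity) (by linarith [exp_pos 1])
    linarith [one_le_log_exp_one_add (by positivity : 0 ≤ x)]

section EuclideanBalls

variable {n : ℕ} {f g b φ : EuclideanSpace ℝ (Fin n) → ℝ} {c : EuclideanSpace ℝ (Fin n)}
  {r N M₁ M₂ L₁ L₂ : ℝ}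

noncomputable def meanOsc (f : EuclideanSpace ℝ (Fin n) → ℝ) (c : EuclideanSpace ℝ (Fin n))
    (r : ℝ) : ℝ :=
  avgBall (fun x => |f x - avgBall f c r|) c r

theorem volume_ball_toReal_pos (c : EuclideanSpace ℝ (Fin n)) (hr : 0 < r) :
    0 < (volume (ball c r)).toReal :=
  ENNReal.toReal_pos (measure_ball_pos volume c hr).ne' measure_ball_lt_top.ne

theorem avgBall_const (hr : 0 < r) (d : ℝ) : avgBall (fun _ => d) c r = d := by
  rw [avgBall, setIntegral_const, smul_eq_mul, ← mul_assoc, measureReal_def,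
    inv_mul_cancel₀ (volume_ball_toReal_pos c hr).ne', one_mul]

theorem avgBall_add (hf : IntegrableOn f (ball c r)) (hg : IntegrableOn g (ball c r)) :
    avgBall (fun x => f x + g x) c r = avgBall f c r + avgBall g c r := by
  rw [avgBall, integral_add hf hg, mul_add, avgBall, avgBall]

theorem avgBall_add_const (hr : 0 < r) (hf : IntegrableOn f (ball c r)) (d : ℝ) :
    avgBall (fun x => f x + d) c r = avgBall f c r + d := by
  rw [avgBall_add hf (integrableOn_const measure_ball_lt_top.ne), avgBall_const hr]

theorem avgBall_const_mul (a : ℝ) : avgBall (fun x => a * f x) c r = a * avgBall f c r := by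
  rw [avgBall, integral_const_mul, avgBall, mul_left_comm]

theorem avgBall_mono (hf : IntegrableOn f (ball c r)) (hg : IntegrableOn g (ball c r))
    (h : ∀ x ∈ ball c r, f x ≤ g x) : avgBall f c r ≤ avgBall g c r :=
  mul_le_mul_of_nonneg_left (setIntegral_mono_on hf hg measurableSet_ball h) (by positivity)

theorem avgBall_nonneg (hf : ∀ x, 0 ≤ f x) : 0 ≤ avgBall f c r :=
  mul_nonneg (by positivity) (integral_nonneg hf)

theorem meanOsc_nonneg : 0 ≤ meanOsc f c r :=
  avgBall_nonneg fun _ => abs_nonneg _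

theorem abs_avgBall_sub_le (hr : 0 < r) (hf : IntegrableOn f (ball c r)) (d : ℝ) :
    |avgBall f c r - d| ≤ avgBall (fun x => |f x - d|) c r := by
  have hsub : avgBall f c r - d = avgBall (fun x => f x - d) c r := by
    simpa only [← sub_eq_add_neg] using (avgBall_add_const hr hf (-d)).symm
  rw [hsub, avgBall, avgBall, abs_mul, abs_of_pos (inv_pos.2 (volume_ball_toReal_pos c hr))]
  exact mul_le_mul_of_nonneg_left abs_integral_le_integral_abs (by positivity)

theorem meanOsc_le_two_mul_avgBall (hr : 0 < r) (hf : IntegrableOn f (ball c r)) (d : ℝ) :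
    meanOsc f c r ≤ 2 * avgBall (fun x => |f x - d|) c r := by
  have hconst (a : ℝ) : IntegrableOn (fun _ => a) (ball c r) :=
    integrableOn_const measure_ball_lt_top.ne
  have hfd : IntegrableOn (fun x => |f x - d|) (ball c r) := (hf.sub (hconst d)).abs
  calc meanOsc f c r ≤ avgBall (fun x => |f x - d| + |avgBall f c r - d|) c r :=
        avgBall_mono (hf.sub (hconst _)).abs (hfd.add (hconst _)) fun x _ =>
          (abs_sub_le _ d _).trans_eq (by rw [abs_sub_comm d])
    _ = avgBall (fun x => |f x - d|) c r + |avgBall f c r - d| := avgBall_add_const hr hfd _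
    _ ≤ 2 * avgBall (fun x => |f x - d|) c r := by linarith [abs_avgBall_sub_le hr hf d]

theorem volume_ball_two_pow_mul_toReal (c : EuclideanSpace ℝ (Fin n)) (r : ℝ) (k : ℕ) :
    (volume (ball c (2 ^ k * r))).toReal = 2 ^ (n * k) * (volume (ball c r)).toReal := by
  rw [Measure.addHaar_ball_two_pow_mul, ENNReal.toReal_mul, finrank_euclideanSpace_fin,
    ENNReal.toReal_pow, ENNReal.toReal_ofNat]

theorem one_le_volume_ball_two_pow_mul (hn : n ≠ 0) (hr : 0 < r) {k : ℕ}
    (hk : ((volume (ball c r)).toReal)⁻¹ ≤ 2 ^ k) : 1 ≤ volume (ball c (2 ^ k * r)) := by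
  have hV₀ := volume_ball_toReal_pos c hr
  have h : 1 ≤ (volume (ball c (2 ^ k * r))).toReal := by
    rw [volume_ball_two_pow_mul_toReal]
    calc (1 : ℝ) ≤ 2 ^ k * (volume (ball c r)).toReal := by rwa [← inv_le_iff_one_le_mul₀ hV₀]
      _ ≤ 2 ^ (n * k) * (volume (ball c r)).toReal := by
        gcongr
        · exact one_le_two
        · exact Nat.le_mul_of_pos_left k (Nat.pos_of_ne_zero hn)
  simpa using ENNReal.ofReal_le_of_le_toReal h

theorem exists_volume_ball_eq_one (hn : n ≠ 0) :
    ∃ r > 0, volume (ball (0 : EuclideanSpace ℝ (Fin n)) r) = 1 :=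
  Measure.exists_addHaar_ball_eq_one volume (by rwa [finrank_euclideanSpace_fin])

theorem avgBall_le_two_pow_mul_avgBall_two_mul (hr : 0 < r)
    (hf : IntegrableOn f (ball c (2 * r))) (hf₀ : ∀ x, 0 ≤ f x) :
    avgBall f c r ≤ 2 ^ n * avgBall f c (2 * r) := by
  have hV := volume_ball_two_pow_mul_toReal c r 1
  rw [pow_one, mul_one] at hV
  have hsub : ∫ x in ball c r, f x ≤ ∫ x in ball c (2 * r), f x :=
    setIntegral_mono_set hf (ae_of_all _ hf₀) (ball_subset_ball (by linarith)).eventuallyLE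
  calc avgBall f c r ≤ ((volume (ball c r)).toReal)⁻¹ * ∫ x in ball c (2 * r), f x :=
        mul_le_mul_of_nonneg_left hsub (by positivity)
    _ = 2 ^ n * avgBall f c (2 * r) := by
        rw [avgBall, hV]
        field_simp

theorem abs_avgBall_sub_avgBall_two_mul_le (hr : 0 < r) (hf : IntegrableOn f (ball c (2 * r))) :
    |avgBall f c r - avgBall f c (2 * r)| ≤ 2 ^ n * meanOsc f c (2 * r) :=
  (abs_avgBall_sub_le hr (hf.mono_set (ball_subset_ball (by linarith))) _).trans
    (avgBall_le_two_pow_mul_avgBall_two_mul hr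
      (hf.sub (integrableOn_const measure_ball_lt_top.ne)).abs fun _ => abs_nonneg _)

def IsBMOWith (b : EuclideanSpace ℝ (Fin n) → ℝ) (M₁ M₂ : ℝ) : Prop :=
  (∀ (c : EuclideanSpace ℝ (Fin n)) (r : ℝ), 0 < r → volume (ball c r) ≤ 1 →
    meanOsc b c r ≤ M₁) ∧
  (∀ (c : EuclideanSpace ℝ (Fin n)) (r : ℝ), 0 < r → 1 ≤ volume (ball c r) →
    avgBall (fun x => |b x|) c r ≤ M₂)

def IsLMOWith (φ : EuclideanSpace ℝ (Fin n) → ℝ) (L₁ L₂ : ℝ) : Prop :=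
  (∀ (c : EuclideanSpace ℝ (Fin n)) (r : ℝ), 0 < r → volume (ball c r) ≤ 1 →
    log (exp 1 + ((volume (ball c r)).toReal)⁻¹) * meanOsc φ c r ≤ L₁) ∧
  (∀ (c : EuclideanSpace ℝ (Fin n)) (r : ℝ), 0 < r → 1 ≤ volume (ball c r) →
    avgBall (fun x => |φ x|) c r ≤ L₂)

theorem IsLMOWith.nonneg (hn : n ≠ 0) (hφ : IsLMOWith φ L₁ L₂) : 0 ≤ L₁ ∧ 0 ≤ L₂ :=
  let ⟨r, hr, hB⟩ := exists_volume_ball_eq_one hn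
  ⟨(mul_nonneg (zero_le_one.trans (one_le_log_exp_one_add (by positivity))) meanOsc_nonneg).trans
      (hφ.1 0 r hr hB.le),
    (avgBall_nonneg fun _ => abs_nonneg _).trans (hφ.2 0 r hr hB.ge)⟩

namespace IsBMOWith

theorem nonneg (hn : n ≠ 0) (hb : IsBMOWith b M₁ M₂) : 0 ≤ M₁ ∧ 0 ≤ M₂ :=
  let ⟨r, hr, hB⟩ := exists_volume_ball_eq_one hn
  ⟨meanOsc_nonneg.trans (hb.1 0 r hr hB.le),
    (avgBall_nonneg fun _ => abs_nonneg _).trans (hb.2 0 r hr hB.ge)⟩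

theorem abs_avgBall_le (hb : IsBMOWith b M₁ M₂) (hr : 0 < r) (hbi : IntegrableOn b (ball c r))
    (hB : 1 ≤ volume (ball c r)) : |avgBall b c r| ≤ M₂ := by
  have h := abs_avgBall_sub_le hr hbi 0
  simp only [sub_zero] at h
  exact h.trans (hb.2 c r hr hB)

theorem meanOsc_le (hn : n ≠ 0) (hb : IsBMOWith b M₁ M₂) (hbi : LocallyIntegrable b volume)
    (hr : 0 < r) : meanOsc b c r ≤ M₁ + 2 * M₂ := by
  obtain ⟨hM₁, hM₂⟩ := hb.nonneg hn
  rcases le_total (volume (ball c r)) 1 with hB | hB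
  · linarith [hb.1 c r hr hB]
  · have h := meanOsc_le_two_mul_avgBall hr (hbi.integrableOn_ball c r) 0
    simp only [sub_zero] at h
    linarith [hb.2 c r hr hB]

theorem abs_avgBall_le_add_abs_avgBall_two_pow_mul (hn : n ≠ 0) (hb : IsBMOWith b M₁ M₂)
    (hbi : LocallyIntegrable b volume) (hr : 0 < r) (k : ℕ) :
    |avgBall b c r| ≤ k * (2 ^ n * (M₁ + 2 * M₂)) + |avgBall b c (2 ^ k * r)| := by
  induction k with
  | zero => simp
  | succ k ih =>
    have hrk : 0 < 2 ^ k * r := by positivity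
    have hstep := (abs_avgBall_sub_avgBall_two_mul_le hrk (hbi.integrableOn_ball c _)).trans
      (mul_le_mul_of_nonneg_left (hb.meanOsc_le hn hbi (by positivity)) (by positivity))
    rw [← mul_assoc, ← pow_succ'] at hstep
    push_cast
    linarith [abs_sub_abs_le_abs_sub (avgBall b c (2 ^ k * r)) (avgBall b c (2 ^ (k + 1) * r))]

theorem abs_avgBall_le_mul_log (hn : n ≠ 0) (hb : IsBMOWith b M₁ M₂)
    (hbi : LocallyIntegrable b volume) (hr : 0 < r) (hB : volume (ball c r) ≤ 1) :
    |avgBall b c r| ≤ 7 * 2 ^ n * (M₁ + M₂) * log (exp 1 + ((volume (ball c r)).toReal)⁻¹) := by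
  obtain ⟨hM₁, hM₂⟩ := hb.nonneg hn
  set V := (volume (ball c r)).toReal
  have hV₀ : 0 < V := volume_ball_toReal_pos c hr
  have hV₁ : V ≤ 1 := by simpa using ENNReal.toReal_mono ENNReal.one_ne_top hB
  obtain ⟨k, hk, hkL⟩ := exists_le_two_pow_and_le_three_mul_log ((one_le_inv₀ hV₀).2 hV₁)
  set L := log (exp 1 + V⁻¹)
  have hL : 1 ≤ L := one_le_log_exp_one_add (by positivity)
  have hchain := hb.abs_avgBall_le_add_abs_avgBall_two_pow_mul (c := c) hn hbi hr k
  have hfar := hb.abs_avgBall_le (by positivity) (hbi.integrableOn_ball c _)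
    (one_le_volume_ball_two_pow_mul hn hr hk)
  have h2n : (1 : ℝ) ≤ 2 ^ n := one_le_pow₀ one_le_two
  calc |avgBall b c r| ≤ k * (2 ^ n * (M₁ + 2 * M₂)) + M₂ := hchain.trans (by gcongr)
    _ ≤ 3 * L * (2 ^ n * (M₁ + 2 * M₂)) + L * M₂ := by
        gcongr
        exact le_mul_of_one_le_left hM₂ hL
    _ ≤ 7 * 2 ^ n * (M₁ + M₂) * L := by
        have hL₀ : 0 ≤ L := zero_le_one.trans hL
        nlinarith [mul_nonneg (mul_nonneg hL₀ hM₁) (zero_le_one.trans h2n),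
          mul_nonneg (mul_nonneg hL₀ hM₂) (sub_nonneg.2 h2n)]

end IsBMOWith

theorem meanOsc_mul_le (hr : 0 < r) (hb : IntegrableOn b (ball c r))
    (hφ : IntegrableOn φ (ball c r)) (hN : ∀ x, |φ x| ≤ N) :
    meanOsc (fun x => b x * φ x) c r ≤
      2 * (N * meanOsc b c r + |avgBall b c r| * meanOsc φ c r) := by
  set b₀ := avgBall b c r
  set φ₀ := avgBall φ c r
  have hconst (a : ℝ) : IntegrableOn (fun _ => a) (ball c r) :=
    integrableOn_const measure_ball_lt_top.ne
  have hbφ : IntegrableOn (fun x => b x * φ x) (ball c r) :=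
    hb.mul_bdd hφ.aestronglyMeasurable (ae_of_all _ hN)
  have hb₀ : IntegrableOn (fun x => |b x - b₀|) (ball c r) := (hb.sub (hconst b₀)).abs
  have hφ₀ : IntegrableOn (fun x => |φ x - φ₀|) (ball c r) := (hφ.sub (hconst φ₀)).abs
  have hpoint (x : EuclideanSpace ℝ (Fin n)) :
      |b x * φ x - b₀ * φ₀| ≤ N * |b x - b₀| + |b₀| * |φ x - φ₀| :=
    calc |b x * φ x - b₀ * φ₀| = |φ x * (b x - b₀) + b₀ * (φ x - φ₀)| := by
          congr 1
          ring
      _ ≤ |φ x| * |b x - b₀| + |b₀| * |φ x - φ₀| := by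
        rw [← abs_mul, ← abs_mul]
        exact abs_add_le _ _
      _ ≤ N * |b x - b₀| + |b₀| * |φ x - φ₀| := by
        gcongr
        exact hN x
  calc meanOsc (fun x => b x * φ x) c r ≤ 2 * avgBall (fun x => |b x * φ x - b₀ * φ₀|) c r :=
        meanOsc_le_two_mul_avgBall hr hbφ _
    _ ≤ 2 * avgBall (fun x => N * |b x - b₀| + |b₀| * |φ x - φ₀|) c r := by
        gcongr
        exact avgBall_mono (hbφ.sub (hconst _)).abs ((hb₀.const_mul N).add (hφ₀.const_mul _))
          fun x _ => hpoint x
    _ = 2 * (N * meanOsc b c r + |b₀| * meanOsc φ c r) := by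
        rw [avgBall_add (hb₀.const_mul N) (hφ₀.const_mul _), avgBall_const_mul, avgBall_const_mul]
        rfl

theorem avgBall_abs_mul_le (hb : IntegrableOn b (ball c r))
    (hφ : AEStronglyMeasurable φ (volume.restrict (ball c r))) (hN : ∀ x, |φ x| ≤ N) :
    avgBall (fun x => |b x * φ x|) c r ≤ N * avgBall (fun x => |b x|) c r := by
  rw [← avgBall_const_mul]
  refine avgBall_mono (hb.mul_bdd hφ (ae_of_all _ hN)).abs (hb.abs.const_mul N) fun x _ => ?_
  rw [abs_mul, mul_comm]
  gcongr
  exact hN x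

theorem IsBMOWith.meanOsc_mul_le_of_isLMOWith (hn : n ≠ 0) (hb : IsBMOWith b M₁ M₂)
    (hbi : LocallyIntegrable b volume) (hφ : IsLMOWith φ L₁ L₂) (hφi : LocallyIntegrable φ volume)
    (hN : ∀ x, |φ x| ≤ N) (hr : 0 < r) (hB : volume (ball c r) ≤ 1) :
    meanOsc (fun x => b x * φ x) c r ≤ 2 * (N * M₁ + 7 * 2 ^ n * (M₁ + M₂) * L₁) := by
  obtain ⟨hM₁, hM₂⟩ := hb.nonneg hn
  have hN₀ : 0 ≤ N := (abs_nonneg _).trans (hN 0)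
  calc meanOsc (fun x => b x * φ x) c r
      ≤ 2 * (N * meanOsc b c r + |avgBall b c r| * meanOsc φ c r) :=
        meanOsc_mul_le hr (hbi.integrableOn_ball c r) (hφi.integrableOn_ball c r) hN
    _ ≤ 2 * (N * M₁ + 7 * 2 ^ n * (M₁ + M₂) * log (exp 1 + ((volume (ball c r)).toReal)⁻¹) *
          meanOsc φ c r) := by
        gcongr
        exacts [hb.1 c r hr hB, meanOsc_nonneg, hb.abs_avgBall_le_mul_log hn hbi hr hB]
    _ ≤ 2 * (N * M₁ + 7 * 2 ^ n * (M₁ + M₂) * L₁) := by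
        rw [mul_assoc _ (log _)]
        gcongr
        exact hφ.1 c r hr hB

end EuclideanBalls

/-- If φ is bounded and lies in lmo(ℝⁿ), then multiplication by φ maps bmo(ℝⁿ)
to bmo(ℝⁿ), with ‖bφ‖_{bmo} ≤ C(‖φ‖_∞ + ‖φ‖_{lmo})‖b‖_{bmo}. -/
theorem lmo_mult_bmo (n : ℕ) (hn : 1 ≤ n) :
    ∃ C > (0 : ℝ), ∀ (φ b : EuclideanSpace ℝ (Fin n) → ℝ) (Nφ L₁ L₂ M₁ M₂ : ℝ),
      LocallyIntegrable φ volume → LocallyIntegrable b volume →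
      (∀ x, |φ x| ≤ Nφ) →
      -- φ ∈ lmo : logarithmically weighted small-ball oscillation, large-ball means
      (∀ (c : EuclideanSpace ℝ (Fin n)) (r : ℝ), 0 < r → volume (ball c r) ≤ 1 →
        Real.log (Real.exp 1 + ((volume (ball c r)).toReal)⁻¹) *
          (((volume (ball c r)).toReal)⁻¹ *
            ∫ x in ball c r, |φ x - avgBall φ c r|) ≤ L₁) →
      (∀ (c : EuclideanSpace ℝ (Fin n)) (r : ℝ), 0 < r → 1 ≤ volume (ball c r) →
        ((volume (ball c r)).toReal)⁻¹ * ∫ x in ball c r, |φ x| ≤ L₂) →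
      -- b ∈ bmo
      (∀ (c : EuclideanSpace ℝ (Fin n)) (r : ℝ), 0 < r → volume (ball c r) ≤ 1 →
        ((volume (ball c r)).toReal)⁻¹ * ∫ x in ball c r, |b x - avgBall b c r| ≤ M₁) →
      (∀ (c : EuclideanSpace ℝ (Fin n)) (r : ℝ), 0 < r → 1 ≤ volume (ball c r) →
        ((volume (ball c r)).toReal)⁻¹ * ∫ x in ball c r, |b x| ≤ M₂) →
      -- conclusion : bφ ∈ bmo with the product norm bound
      LocallyIntegrable (fun x => b x * φ x) volume ∧
      (∀ (c : EuclideanSpace ℝ (Fin n)) (r : ℝ), 0 < r → volume (ball c r) ≤ 1 →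
        ((volume (ball c r)).toReal)⁻¹ *
            ∫ x in ball c r, |b x * φ x - avgBall (fun y => b y * φ y) c r| ≤
          C * (Nφ + L₁ + L₂) * (M₁ + M₂)) ∧
      (∀ (c : EuclideanSpace ℝ (Fin n)) (r : ℝ), 0 < r → 1 ≤ volume (ball c r) →
        ((volume (ball c r)).toReal)⁻¹ * ∫ x in ball c r, |b x * φ x| ≤
          C * (Nφ + L₁ + L₂) * (M₁ + M₂)) := by
  have hn₀ : n ≠ 0 := Nat.one_le_iff_ne_zero.mp hn
  refine ⟨14 * 2 ^ n, by positivity,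
    fun φ b Nφ L₁ L₂ M₁ M₂ hφi hbi hφN hlmo₁ hlmo₂ hbmo₁ hbmo₂ => ?_⟩
  have hφ : IsLMOWith φ L₁ L₂ := ⟨hlmo₁, hlmo₂⟩
  have hb : IsBMOWith b M₁ M₂ := ⟨hbmo₁, hbmo₂⟩
  obtain ⟨hL₁, hL₂⟩ := hφ.nonneg hn₀
  obtain ⟨hM₁, hM₂⟩ := hb.nonneg hn₀
  have hNφ : 0 ≤ Nφ := (abs_nonneg _).trans (hφN 0)
  have h2n : (1 : ℝ) ≤ 2 ^ n := one_le_pow₀ one_le_two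
  refine ⟨hbi.mul_bdd hφi.aestronglyMeasurable hφN, fun c r hr hB => ?_, fun c r hr hB => ?_⟩
  · calc meanOsc (fun x => b x * φ x) c r ≤ 2 * (Nφ * M₁ + 7 * 2 ^ n * (M₁ + M₂) * L₁) :=
          hb.meanOsc_mul_le_of_isLMOWith hn₀ hbi hφ hφi hφN hr hB
      _ ≤ 14 * 2 ^ n * (Nφ + L₁ + L₂) * (M₁ + M₂) := by
          nlinarith [mul_le_mul_of_nonneg_right h2n (mul_nonneg hNφ hM₁),
            mul_nonneg (mul_nonneg hNφ hM₂) (by positivity : (0 : ℝ) ≤ 2 ^ n),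
            mul_nonneg (mul_nonneg hL₂ (add_nonneg hM₁ hM₂)) (by positivity : (0 : ℝ) ≤ 2 ^ n)]
  · calc avgBall (fun x => |b x * φ x|) c r ≤ Nφ * M₂ :=
          (avgBall_abs_mul_le (hbi.integrableOn_ball c r) hφi.aestronglyMeasurable.restrict
            hφN).trans (mul_le_mul_of_nonneg_left (hbmo₂ c r hr hB) hNφ)
      _ ≤ 14 * 2 ^ n * (Nφ + L₁ + L₂) * (M₁ + M₂) := by
          nlinarith [mul_le_mul_of_nonneg_right h2n (mul_nonneg hNφ hM₂),
            mul_nonneg (mul_nonneg hNφ hM₁) (by positivity : (0 : ℝ) ≤ 2 ^ n),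
            mul_nonneg (mul_nonneg (add_nonneg hL₁ hL₂) (add_nonneg hM₁ hM₂))
              (by positivity : (0 : ℝ) ≤ 2 ^ n)]
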